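/- Let b ≥ 2, s ≥ 1, n ≥ 2, and let P_n = (V_1,…,V_n) be points in [0,1)^s such that for each j the j-th coordinates V_{1,j},…,V_{n,j} are pairwise distinct, with associated function ψ. Let x, y ∈ [0,1]^s and let (t_k)_{k ∈ ℕ^s} be the coefficients t_k = ∏_{j=1}^s t_{j,k_j}, where t_{j,0} = b·V_0(x_j,y_j)/(b−1) and t_{j,k} = (b·V_k(x_j,y_j) − V_{k−1}(x_j,y_j))/(b−1) for k ≥ 1. Then the Lebesgue integral of ψ over R(x,y) equals Σ_{k ∈ ℕ^s} t_k · C_b(k;P_n); in particular, for any real number C such that C_b(k;P_n) ≤ C for all k ∈ ℕ^s, the integral of ψ over R(x,y) is at most C · ∏_{j=1}^s x_j·y_j. -/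

import Mathlib

open MeasureTheory
open scoped Classical

noncomputable def gammaB (b : ℕ) (x y : ℝ) : ℕ∞ :=
  if x = y then ⊤
  else (↑(sInf {i : ℕ | ⌊(b : ℝ) ^ i * x⌋ = ⌊(b : ℝ) ^ i * y⌋ ∧
      ⌊(b : ℝ) ^ (i + 1) * x⌋ ≠ ⌊(b : ℝ) ^ (i + 1) * y⌋}) : ℕ∞)

def Dset (b : ℕ) (i : ℕ) : Set (ℝ × ℝ) :=
  {p | p.1 ∈ Set.Ico (0 : ℝ) 1 ∧ p.2 ∈ Set.Ico (0 : ℝ) 1 ∧ gammaB b p.1 p.2 = (i : ℕ∞)}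

noncomputable def Vi (b : ℕ) (i : ℕ) (x y : ℝ) : ℝ :=
  (volume ((Set.Ico (0 : ℝ) x ×ˢ Set.Ico (0 : ℝ) y) ∩ Dset b i)).toReal

noncomputable def mB {n s : ℕ} (b : ℕ) (P : Fin n → Fin s → ℝ) (k : Fin s → ℕ) (l : Fin n) : ℕ :=
  (Finset.univ.filter fun j : Fin n =>
    j ≠ l ∧ ∀ r : Fin s, (k r : ℕ∞) ≤ gammaB b (P l r) (P j r)).card

noncomputable def nB {n s : ℕ} (b : ℕ) (P : Fin n → Fin s → ℝ) (i : Fin s → ℕ) (l : Fin n) : ℕ :=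
  (Finset.univ.filter fun j : Fin n =>
    j ≠ l ∧ ∀ r : Fin s, gammaB b (P l r) (P j r) = (i r : ℕ∞)).card

noncomputable def MB {n s : ℕ} (b : ℕ) (P : Fin n → Fin s → ℝ) (k : Fin s → ℕ) : ℕ :=
  ∑ l : Fin n, mB b P k l

noncomputable def NB {n s : ℕ} (b : ℕ) (P : Fin n → Fin s → ℝ) (i : Fin s → ℕ) : ℕ :=
  ∑ l : Fin n, nB b P i l

noncomputable def CB {n s : ℕ} (b : ℕ) (P : Fin n → Fin s → ℝ) (k : Fin s → ℕ) : ℝ :=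
  (b : ℝ) ^ (∑ j, k j) * (MB b P k : ℝ) / ((n : ℝ) * ((n : ℝ) - 1))

def DsetS (b s : ℕ) (i : Fin s → ℕ) : Set ((Fin s → ℝ) × (Fin s → ℝ)) :=
  {p | (∀ j, p.1 j ∈ Set.Ico (0 : ℝ) 1) ∧ (∀ j, p.2 j ∈ Set.Ico (0 : ℝ) 1) ∧
    ∀ j, gammaB b (p.1 j) (p.2 j) = (i j : ℕ∞)}

def Rset (s : ℕ) (x y : Fin s → ℝ) : Set ((Fin s → ℝ) × (Fin s → ℝ)) :=
  (Set.univ.pi fun j => Set.Ico 0 (x j)) ×ˢ (Set.univ.pi fun j => Set.Ico 0 (y j))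

noncomputable def ViS (b s : ℕ) (i : Fin s → ℕ) (x y : Fin s → ℝ) : ℝ :=
  (volume (Rset s x y ∩ DsetS b s i)).toReal

noncomputable def psi {n s : ℕ} (b : ℕ) (P : Fin n → Fin s → ℝ) (x y : Fin s → ℝ) : ℝ :=
  if ∀ j, gammaB b (x j) (y j) ≠ ⊤ then
    (NB b P (fun j => (gammaB b (x j) (y j)).toNat) : ℝ) *
      (b : ℝ) ^ (s + ∑ j, (gammaB b (x j) (y j)).toNat) /
      (((b : ℝ) - 1) ^ s * ((n : ℝ) * ((n : ℝ) - 1)))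
  else 0

noncomputable def tCoef (b : ℕ) (x y : ℝ) : ℕ → ℝ
  | 0 => (b : ℝ) * Vi b 0 x y / ((b : ℝ) - 1)
  | (k + 1) => ((b : ℝ) * Vi b (k + 1) x y - Vi b k x y) / ((b : ℝ) - 1)


/-!
Write `W_L(x, y)` for the area of the pairs in `[0, x) × [0, y)` whose first `L` base-`b` digits
agree, so that `V_i = W_i - W_{i+1}`. Both sides of the identity are sums over the ordered pairs
`l ≠ j`: `ψ` is a sum of indicators of the sets `{γ_b(u, v) = γ_b(V_l, V_j)}`, whose volumes in
`R(x, y)` are products of the `V_i`, while `M_b(k)` counts the pairs with `k ≤ γ_b(V_l, V_j)`; the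
two sides then agree by the telescoping identity `∑_{m ≤ G} b^m t_m = b^{G+1} V_G / (b - 1)`.

For the bound, `t_{m+1} = (d_m - d_{m+1}) / (b - 1)` and `∑_{m ≤ N} t_m = x y - d_N / (b - 1)`,
where `d_L = b W_{L+1} - W_L`, so it suffices that `d_L` is nonnegative and nonincreasing in `L`.
In the coordinates `X = b^L x`, `Y = b^L y` one has `W_L = F(X, Y) / b^{2L}` with an explicit
`F`; both facts reduce, by integer translation, to `X` and `Y` in one unit cell, and then to
polynomial inequalities in their first two base-`b` digits.
-/

open Set

section Digits

variable {b : ℕ}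

lemma floor_pow_mul_eq_of_succ (hb : 0 < b) {x y : ℝ} {m : ℕ}
    (h : ⌊(b : ℝ) ^ (m + 1) * x⌋ = ⌊(b : ℝ) ^ (m + 1) * y⌋) :
    ⌊(b : ℝ) ^ m * x⌋ = ⌊(b : ℝ) ^ m * y⌋ := by
  have hb' : (b : ℝ) ≠ 0 := by positivity
  have key (z : ℝ) : ⌊(b : ℝ) ^ m * z⌋ = ⌊(b : ℝ) ^ (m + 1) * z⌋ / b := by
    rw [← Int.floor_div_natCast, pow_succ]
    field_simp
  rw [key, key, h]

lemma floor_pow_mul_eq_of_le (hb : 0 < b) {x y : ℝ} {m m' : ℕ} (hm : m ≤ m')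
    (h : ⌊(b : ℝ) ^ m' * x⌋ = ⌊(b : ℝ) ^ m' * y⌋) :
    ⌊(b : ℝ) ^ m * x⌋ = ⌊(b : ℝ) ^ m * y⌋ := by
  induction m', hm using Nat.le_induction with
  | base => exact h
  | succ k _ ih => exact ih (floor_pow_mul_eq_of_succ hb h)

lemma exists_floor_pow_mul_ne (hb : 2 ≤ b) {x y : ℝ} (hxy : x ≠ y) :
    ∃ m : ℕ, ⌊(b : ℝ) ^ m * x⌋ ≠ ⌊(b : ℝ) ^ m * y⌋ := by
  have hb1 : (1 : ℝ) < b := by exact_mod_cast hb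
  have hpos : 0 < |x - y| := abs_pos.2 (sub_ne_zero.2 hxy)
  obtain ⟨m, hm⟩ := pow_unbounded_of_one_lt (1 / |x - y|) hb1
  refine ⟨m, fun he => ?_⟩
  have h1 := Int.abs_sub_lt_one_of_floor_eq_floor he
  rw [← mul_sub, abs_mul, abs_of_nonneg (by positivity)] at h1
  rw [div_lt_iff₀ hpos] at hm
  linarith

lemma gammaB_eq_coe_iff (hb : 2 ≤ b) {x y : ℝ} (hx : x ∈ Ico (0 : ℝ) 1)
    (hy : y ∈ Ico (0 : ℝ) 1) (i : ℕ) :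
    gammaB b x y = i ↔ ⌊(b : ℝ) ^ i * x⌋ = ⌊(b : ℝ) ^ i * y⌋ ∧
      ⌊(b : ℝ) ^ (i + 1) * x⌋ ≠ ⌊(b : ℝ) ^ (i + 1) * y⌋ := by
  set S := {i : ℕ | ⌊(b : ℝ) ^ i * x⌋ = ⌊(b : ℝ) ^ i * y⌋ ∧
      ⌊(b : ℝ) ^ (i + 1) * x⌋ ≠ ⌊(b : ℝ) ^ (i + 1) * y⌋}
  change gammaB b x y = i ↔ i ∈ S
  have hS_subsingleton : S.Subsingleton := by
    intro i hi j hj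
    by_contra hne
    rcases Nat.lt_or_gt_of_ne hne with h | h
    · exact hi.2 (floor_pow_mul_eq_of_le (by omega) h hj.1)
    · exact hj.2 (floor_pow_mul_eq_of_le (by omega) h hi.1)
  rcases eq_or_ne x y with rfl | hxy
  · simp [gammaB, S]
  have hS_nonempty : S.Nonempty := by
    obtain ⟨m, hm⟩ := exists_floor_pow_mul_ne hb hxy
    induction m with
    | zero => simp [Int.floor_eq_zero_iff.2 hx, Int.floor_eq_zero_iff.2 hy] at hm
    | succ m ih =>
      by_cases h : ⌊(b : ℝ) ^ m * x⌋ = ⌊(b : ℝ) ^ m * y⌋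
      · exact ⟨m, h, hm⟩
      · exact ih h
  rw [gammaB, if_neg hxy, Nat.cast_inj]
  exact ⟨fun h => h ▸ Nat.sInf_mem hS_nonempty,
    fun hi => hS_subsingleton (Nat.sInf_mem hS_nonempty) hi⟩

lemma gammaB_ne_top {x y : ℝ} (hxy : x ≠ y) : gammaB b x y ≠ ⊤ := by
  simp [gammaB, hxy]

end Digits

section CellArea

variable {b : ℕ} {X Y : ℝ}

/-- For `0 ≤ X ≤ Y`, the area of `{(U, V) ∈ [0, X) × [0, Y) | ⌊U⌋ = ⌊V⌋}`. -/
noncomputable def cellArea (X Y : ℝ) : ℝ := ⌊X⌋ + Int.fract X * min (Y - ⌊X⌋) 1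

lemma cellArea_add_intCast (X Y : ℝ) (m : ℤ) :
    cellArea (X + m) (Y + m) = cellArea X Y + m := by
  simp only [cellArea, Int.floor_add_intCast, Int.fract_add_intCast]
  push_cast
  ring_nf

lemma cellArea_of_floor_add_one_le (h : ⌊X⌋ + 1 ≤ Y) : cellArea X Y = X := by
  rw [cellArea, min_eq_right (by linarith), mul_one, Int.floor_add_fract]

lemma cellArea_of_mem_Ico (hX : X ∈ Ico 0 1) : cellArea X Y = X * min Y 1 := by
  have hfl : ⌊X⌋ = 0 := Int.floor_eq_zero_iff.2 hX
  simp [cellArea, Int.fract, hfl]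

lemma cellArea_of_lt_one (hX : 0 ≤ X) (hXY : X ≤ Y) (hY : Y < 1) : cellArea X Y = X * Y := by
  rw [cellArea_of_mem_Ico ⟨hX, hXY.trans_lt hY⟩, min_eq_left hY.le]

lemma floor_mul_add_one_le (hb : 0 < b) (h : ⌊X⌋ + 1 ≤ Y) : ⌊(b : ℝ) * X⌋ + 1 ≤ b * Y := by
  have hb' : (0 : ℝ) < b := by exact_mod_cast hb
  have hlt : ⌊(b : ℝ) * X⌋ + 1 ≤ b * (⌊X⌋ + 1) :=
    Int.floor_lt.2 (by push_cast; nlinarith [Int.lt_floor_add_one X])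
  have hlt' : ((⌊(b : ℝ) * X⌋ + 1 : ℤ) : ℝ) ≤ ((b * (⌊X⌋ + 1) : ℤ) : ℝ) := by exact_mod_cast hlt
  push_cast at hlt'
  nlinarith

noncomputable def cellDefect (b : ℕ) (X Y : ℝ) : ℝ := cellArea (b * X) (b * Y) - b * cellArea X Y

lemma cellDefect_add_intCast (b : ℕ) (X Y : ℝ) (m : ℤ) :
    cellDefect b (X + m) (Y + m) = cellDefect b X Y := by
  have h (Z : ℝ) : (b : ℝ) * (Z + m) = b * Z + ((b * m : ℤ) : ℝ) := by push_cast; ring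
  simp only [cellDefect, h, cellArea_add_intCast]
  push_cast
  ring

lemma cellDefect_eq_zero (hb : 0 < b) (h : ⌊X⌋ + 1 ≤ Y) : cellDefect b X Y = 0 := by
  rw [cellDefect, cellArea_of_floor_add_one_le h,
    cellArea_of_floor_add_one_le (floor_mul_add_one_le hb h), sub_self]

lemma cellDefect_nonneg_of_lt_one (hb : 0 < b) (hX : 0 ≤ X) (hXY : X ≤ Y) (hY : Y < 1) :
    0 ≤ cellDefect b X Y := by
  have hb' : (0 : ℝ) < b := by exact_mod_cast hb
  set p := ⌊(b : ℝ) * X⌋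
  have hp0 : (0 : ℝ) ≤ p := by exact_mod_cast Int.floor_nonneg.2 (by positivity)
  have hpb : (p : ℝ) + 1 ≤ b := by
    have : p + 1 ≤ b := Int.floor_lt.2 (by push_cast; nlinarith)
    exact_mod_cast this
  set ξ := Int.fract ((b : ℝ) * X)
  have hξ : ξ ∈ Ico 0 1 := ⟨Int.fract_nonneg _, Int.fract_lt_one _⟩
  have hU : (b : ℝ) * X = ξ + p := (Int.fract_add_floor _).symm
  rw [cellDefect, cellArea_of_lt_one hX hXY hY, hU, show (b : ℝ) * Y = (b * Y - p) + p by ring,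
    cellArea_add_intCast, cellArea_of_mem_Ico hξ]
  have hbXY : (b : ℝ) * (X * Y) * b = (ξ + p) * (b * Y) := by rw [← hU]; ring
  rcases le_total ((b : ℝ) * Y - p) 1 with h | h
  · rw [min_eq_left h]
    have hη : ξ ≤ b * Y - p := by nlinarith
    nlinarith [mul_nonneg hp0 (sub_nonneg.2 hpb), mul_nonneg (mul_nonneg hp0 (sub_nonneg.2 hξ.2.le))
      (sub_nonneg.2 h), mul_nonneg (mul_nonneg (sub_nonneg.2 hpb) hξ.1) (hξ.1.trans hη)]
  · rw [min_eq_right h]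
    nlinarith [mul_nonneg (mul_nonneg hb'.le hX) (sub_nonneg.2 hY.le)]

lemma exists_intCast_shift_lt_one (hXY : X ≤ Y) (h : ¬⌊X⌋ + 1 ≤ Y) :
    ∃ X' Y' : ℝ, ∃ m : ℤ, X = X' + m ∧ Y = Y' + m ∧ 0 ≤ X' ∧ X' ≤ Y' ∧ Y' < 1 :=
  ⟨Int.fract X, Y - ⌊X⌋, ⌊X⌋, (Int.fract_add_floor X).symm, by ring, Int.fract_nonneg X,
    by linarith [Int.fract_add_floor X], by linarith [not_le.1 h]⟩

lemma cellDefect_nonneg (hb : 0 < b) (hXY : X ≤ Y) : 0 ≤ cellDefect b X Y := by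
  by_cases h : ⌊X⌋ + 1 ≤ Y
  · exact (cellDefect_eq_zero hb h).ge
  obtain ⟨X, Y, m, rfl, rfl, hX, hXY, hY⟩ := exists_intCast_shift_lt_one hXY h
  rw [cellDefect_add_intCast]
  exact cellDefect_nonneg_of_lt_one hb hX hXY hY

lemma intCast_mul_add_sub_one_nonneg (e : ℤ) {θ : ℝ} (h0 : 0 ≤ θ) (h2 : θ ≤ 2) :
    0 ≤ (e : ℝ) * (e + θ - 1) := by
  rcases (by omega : e ≤ -1 ∨ e = 0 ∨ 1 ≤ e) with he | rfl | he
  · have he' : (e : ℝ) ≤ -1 := by exact_mod_cast he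
    nlinarith
  · simp
  · have he' : (1 : ℝ) ≤ e := by exact_mod_cast he
    nlinarith

lemma intCast_mul_sub_add_mul_sub_one_nonneg {p : ℤ} {ξ η : ℝ} (hp0 : 0 ≤ p) (hpb : p + 1 ≤ b)
    (hξ : 0 ≤ ξ) (hη : η < 1) (hη1 : 1 ≤ b * η) (hξb : b * ξ ≤ b - 1) :
    0 ≤ p * (b - p - ξ - η) + ξ * (b * η - 1) := by
  rcases (by omega : p = 0 ∨ p + 1 = b ∨ (1 ≤ p ∧ p + 2 ≤ b)) with hp | hp | ⟨hp1, hp2⟩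
  · simpa [hp] using mul_nonneg hξ (sub_nonneg.2 hη1)
  · rw [show (p : ℝ) = b - 1 by rw [eq_sub_iff_add_eq]; exact_mod_cast hp]
    nlinarith [mul_nonneg (sub_nonneg.2 hη.le) (sub_nonneg.2 hξb)]
  · have hp1' : (1 : ℝ) ≤ p := by exact_mod_cast hp1
    have hp2' : (p : ℝ) + 2 ≤ b := by exact_mod_cast hp2
    have hξ1 : ξ ≤ 1 := by nlinarith
    have hη0 : 0 ≤ η := by nlinarith
    nlinarith [mul_nonneg (mul_nonneg (sub_nonneg.2 hp1') (sub_nonneg.2 hξ1)) (sub_nonneg.2 hη.le),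
      mul_nonneg (sub_nonneg.2 hp1') (by linarith : (0 : ℝ) ≤ b - 2 - p),
      mul_nonneg (mul_nonneg (by linarith : (0 : ℝ) ≤ b - 1 - p) hξ) hη0,
      mul_nonneg hξ (sub_nonneg.2 hη.le)]

lemma cellDefect_le_of_lt_one (hb : 0 < b) {p : ℤ} (hp0 : 0 ≤ p) (hpb : p + 1 ≤ b) {ξ η : ℝ}
    (hξ : 0 ≤ ξ) (hξη : ξ ≤ η) (hη : η < 1) :
    cellDefect b ξ η ≤ b ^ 2 * (ξ * η + p) - b * ((ξ + p) * (η + p)) := by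
  have hb' : (0 : ℝ) < b := by exact_mod_cast hb
  have hp0' : (0 : ℝ) ≤ p := by exact_mod_cast hp0
  have hpb' : (p : ℝ) + 1 ≤ b := by exact_mod_cast hpb
  rw [cellDefect, cellArea_of_lt_one hξ hξη hη]
  set r := ⌊(b : ℝ) * ξ⌋
  set α := Int.fract ((b : ℝ) * ξ)
  have hα : α ∈ Ico 0 1 := ⟨Int.fract_nonneg _, Int.fract_lt_one _⟩
  have hA : (b : ℝ) * ξ = α + r := (Int.fract_add_floor _).symm
  have hr0 : (0 : ℝ) ≤ r := by exact_mod_cast Int.floor_nonneg.2 (by positivity)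
  have hbξη : (b : ℝ) * ξ ≤ b * η := mul_le_mul_of_nonneg_left hξη hb'.le
  rw [hA, show (b : ℝ) * η = (b * η - r) + r by ring, cellArea_add_intCast, cellArea_of_mem_Ico hα]
  rcases le_total ((b : ℝ) * η - r) 1 with h | h
  · -- the gap is `p (b + 1) (b - 1 - p) + (r - p) (r - p + α + β - 1)` with `β = b η - r`
    rw [min_eq_left h]
    have he := intCast_mul_add_sub_one_nonneg (r - p) (θ := α + (b * η - r))
      (by linarith [hα.1]) (by linarith [hα.2])
    rw [show α = b * ξ - r by linarith] at he ⊢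
    push_cast at he
    nlinarith [mul_nonneg (mul_nonneg hp0' (by linarith : (0 : ℝ) ≤ b + 1))
      (by linarith : (0 : ℝ) ≤ b - 1 - p)]
  · -- the gap is `b (p (b - p - ξ - η) + ξ (b η - 1))`
    rw [min_eq_right h]
    have hrb : r + 2 ≤ (b : ℤ) := by
      have : r + 1 < (b : ℤ) := by exact_mod_cast (show (r : ℝ) + 1 < b by nlinarith)
      omega
    have hrb' : (r : ℝ) + 2 ≤ b := by exact_mod_cast hrb
    have hη1 : 1 ≤ (b : ℝ) * η := by linarith
    have hξb : (b : ℝ) * ξ ≤ b - 1 := by linarith [hα.2]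
    nlinarith [mul_nonneg hb'.le (intCast_mul_sub_add_mul_sub_one_nonneg hp0 hpb hξ hη hη1 hξb)]

lemma cellDefect_mul_le_of_lt_one (hb : 0 < b) (hX : 0 ≤ X) (hXY : X ≤ Y) (hY : Y < 1) :
    cellDefect b (b * X) (b * Y) ≤ b ^ 2 * cellDefect b X Y := by
  have hb' : (0 : ℝ) < b := by exact_mod_cast hb
  set p := ⌊(b : ℝ) * X⌋
  by_cases hpY : (p : ℝ) + 1 ≤ b * Y
  · rw [cellDefect_eq_zero hb hpY]
    exact mul_nonneg (by positivity) (cellDefect_nonneg_of_lt_one hb hX hXY hY)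
  have hp0 : 0 ≤ p := Int.floor_nonneg.2 (by positivity)
  have hpb : p + 1 ≤ b := Int.floor_lt.2 (by push_cast; nlinarith)
  set ξ := Int.fract ((b : ℝ) * X)
  set η := (b : ℝ) * Y - p
  have hU : (b : ℝ) * X = ξ + p := (Int.fract_add_floor _).symm
  have hV : (b : ℝ) * Y = η + p := by ring
  have hξ : 0 ≤ ξ := Int.fract_nonneg _
  have hξη : ξ ≤ η := by nlinarith
  have hη : η < 1 := by linarith [not_le.1 hpY]
  have hRHS : (b : ℝ) ^ 2 * cellDefect b X Y = b ^ 2 * (ξ * η + p) - b * ((ξ + p) * (η + p)) := by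
    rw [cellDefect, cellArea_of_lt_one hX hXY hY, hU, hV, cellArea_add_intCast,
      cellArea_of_lt_one hξ hξη hη, ← hU, ← hV]
    ring
  rw [hRHS, hU, hV, cellDefect_add_intCast]
  exact cellDefect_le_of_lt_one hb hp0 hpb hξ hξη hη

lemma cellDefect_mul_le (hb : 0 < b) (hXY : X ≤ Y) :
    cellDefect b (b * X) (b * Y) ≤ b ^ 2 * cellDefect b X Y := by
  by_cases h : ⌊X⌋ + 1 ≤ Y
  · rw [cellDefect_eq_zero hb h, cellDefect_eq_zero hb (floor_mul_add_one_le hb h), mul_zero]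
  obtain ⟨X, Y, m, rfl, rfl, hX, hXY, hY⟩ := exists_intCast_shift_lt_one hXY h
  rw [cellDefect_add_intCast, mul_add, mul_add,
    show (b : ℝ) * m = ((b * m : ℤ) : ℝ) by push_cast; ring, cellDefect_add_intCast]
  exact cellDefect_mul_le_of_lt_one hb hX hXY hY

end CellArea

section AgreeVol

variable {b : ℕ} {x y : ℝ}

def agreeSet (b L : ℕ) : Set (ℝ × ℝ) :=
  (Ico (0 : ℝ) 1 ×ˢ Ico (0 : ℝ) 1) ∩ {p | ⌊(b : ℝ) ^ L * p.1⌋ = ⌊(b : ℝ) ^ L * p.2⌋}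

noncomputable def agreeVol (b L : ℕ) (x y : ℝ) : ℝ :=
  (volume ((Ico (0 : ℝ) x ×ˢ Ico (0 : ℝ) y) ∩ agreeSet b L)).toReal

lemma measurableSet_agreeSet (b L : ℕ) : MeasurableSet (agreeSet b L) :=
  (measurableSet_Ico.prod measurableSet_Ico).inter
    (measurableSet_eq_fun (Int.measurable_floor.comp (measurable_const.mul measurable_fst))
      (Int.measurable_floor.comp (measurable_const.mul measurable_snd)))

lemma agreeSet_succ_subset (hb : 0 < b) (L : ℕ) : agreeSet b (L + 1) ⊆ agreeSet b L :=
  fun _ ⟨hsq, hfl⟩ => ⟨hsq, floor_pow_mul_eq_of_succ hb hfl⟩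

lemma Dset_eq_diff (hb : 2 ≤ b) (i : ℕ) : Dset b i = agreeSet b i \ agreeSet b (i + 1) := by
  ext ⟨u, v⟩
  simp only [Dset, agreeSet, mem_ofPred_eq, mem_sdiff, mem_inter_iff, mem_prod]
  constructor
  · rintro ⟨hu, hv, h⟩
    have h' := (gammaB_eq_coe_iff hb hu hv i).1 h
    exact ⟨⟨⟨hu, hv⟩, h'.1⟩, fun h'' => h'.2 h''.2⟩
  · rintro ⟨⟨⟨hu, hv⟩, h1⟩, h2⟩
    exact ⟨hu, hv, (gammaB_eq_coe_iff hb hu hv i).2 ⟨h1, fun h' => h2 ⟨⟨hu, hv⟩, h'⟩⟩⟩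

lemma measurableSet_Dset (hb : 2 ≤ b) (i : ℕ) : MeasurableSet (Dset b i) := by
  rw [Dset_eq_diff hb]
  exact (measurableSet_agreeSet b i).diff (measurableSet_agreeSet b (i + 1))

lemma volume_inter_agreeSet_ne_top (s : Set (ℝ × ℝ)) (L : ℕ) :
    volume (s ∩ agreeSet b L) ≠ ⊤ := by
  refine ne_top_of_le_ne_top ?_ (measure_mono (inter_subset_right.trans inter_subset_left))
  rw [Measure.volume_eq_prod, Measure.prod_prod, Real.volume_Ico]
  simp

lemma Vi_eq_agreeVol_sub (hb : 2 ≤ b) (i : ℕ) (x y : ℝ) :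
    Vi b i x y = agreeVol b i x y - agreeVol b (i + 1) x y := by
  set box := Ico (0 : ℝ) x ×ˢ Ico (0 : ℝ) y
  have hsub : box ∩ agreeSet b (i + 1) ⊆ box ∩ agreeSet b i :=
    inter_subset_inter_right _ (agreeSet_succ_subset (by omega) i)
  rw [Vi, agreeVol, agreeVol, Dset_eq_diff hb, inter_sdiff_distrib_left,
    measure_sdiff hsub ((measurableSet_Ico.prod measurableSet_Ico).inter
      (measurableSet_agreeSet b _)).nullMeasurableSet (volume_inter_agreeSet_ne_top _ _),
    ENNReal.toReal_sub_of_le (measure_mono hsub) (volume_inter_agreeSet_ne_top _ _)]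

noncomputable def cellLen (X : ℝ) (t : ℕ) : ℝ := max (min X (t + 1) - t) 0

/-- `[0, z) ∩ [t / b^L, (t + 1) / b^L)`, written as a preimage under scaling so that its volume
comes from `Real.volume_preimage_mul_left`. -/
def digitSlice (b L : ℕ) (z : ℝ) (t : ℕ) : Set ℝ :=
  ((b : ℝ) ^ L * ·) ⁻¹' (Ico 0 ((b : ℝ) ^ L * z) ∩ Ico (t : ℝ) (t + 1))

lemma measurableSet_digitSlice (b L : ℕ) (z : ℝ) (t : ℕ) : MeasurableSet (digitSlice b L z t) :=
  (measurableSet_Ico.inter measurableSet_Ico).preimage (measurable_const.mul measurable_id)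

lemma volume_digitSlice (hb : 0 < b) (L : ℕ) (z : ℝ) (t : ℕ) :
    volume (digitSlice b L z t) = ENNReal.ofReal |((b : ℝ) ^ L)⁻¹| *
      ENNReal.ofReal (min ((b : ℝ) ^ L * z) (t + 1) - t) := by
  rw [digitSlice, Real.volume_preimage_mul_left (by positivity), Ico_inter_Ico,
    max_eq_right (by positivity), Real.volume_Ico]

lemma toReal_volume_digitSlice (hb : 0 < b) (L : ℕ) (z : ℝ) (t : ℕ) :
    (volume (digitSlice b L z t)).toReal = cellLen (b ^ L * z) t / (b : ℝ) ^ L := by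
  rw [volume_digitSlice hb, ENNReal.toReal_mul, ENNReal.toReal_ofReal (abs_nonneg _),
    ENNReal.toReal_ofReal', abs_inv, abs_of_pos (by positivity), cellLen]
  ring

lemma inter_agreeSet_eq_biUnion (hb : 0 < b) (L : ℕ) (x y : ℝ) :
    (Ico (0 : ℝ) x ×ˢ Ico (0 : ℝ) y) ∩ agreeSet b L =
      ⋃ t ∈ Finset.range (b ^ L), digitSlice b L x t ×ˢ digitSlice b L y t := by
  set B : ℝ := (b : ℝ) ^ L
  have hB : 0 < B := by positivity
  have hBn : ((b ^ L : ℕ) : ℝ) = B := Nat.cast_pow b L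
  ext ⟨u, v⟩
  simp only [agreeSet, digitSlice, mem_inter_iff, mem_prod, mem_iUnion, mem_preimage, mem_Ico,
    Finset.mem_range, exists_prop, mem_ofPred_eq]
  constructor
  · rintro ⟨⟨⟨hu0, hux⟩, hv0, hvy⟩, ⟨⟨-, hu1⟩, -, -⟩, hfl⟩
    have hBu : 0 ≤ B * u := by positivity
    have hBv : 0 ≤ B * v := by positivity
    have hfl' : ⌊B * v⌋₊ = ⌊B * u⌋₊ := by rw [← Int.floor_toNat, ← hfl, Int.floor_toNat]
    refine ⟨⌊B * u⌋₊, (Nat.floor_lt hBu).2 (by rw [hBn]; nlinarith),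
      ⟨⟨hBu, by nlinarith⟩, Nat.floor_le hBu, Nat.lt_floor_add_one _⟩,
      ⟨hBv, by nlinarith⟩, ?_, ?_⟩
    · rw [← hfl']; exact Nat.floor_le hBv
    · rw [← hfl']; exact Nat.lt_floor_add_one _
  · rintro ⟨t, ht, ⟨⟨hu0, hux⟩, htu, hut⟩, ⟨hv0, hvy⟩, htv, hvt⟩
    have htB : (t : ℝ) + 1 ≤ B := by rw [← hBn]; exact_mod_cast ht
    have hfloor {w : ℝ} (h1 : (t : ℝ) ≤ B * w) (h2 : B * w < t + 1) : ⌊B * w⌋ = t :=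
      Int.floor_eq_iff.2 ⟨by exact_mod_cast h1, by exact_mod_cast h2⟩
    exact ⟨⟨⟨by nlinarith, by nlinarith⟩, by nlinarith, by nlinarith⟩,
      ⟨⟨by nlinarith, by nlinarith⟩, by nlinarith, by nlinarith⟩,
      (hfloor htu hut).trans (hfloor htv hvt).symm⟩

lemma pairwiseDisjoint_digitSlice (b L : ℕ) (x y : ℝ) (s : Set ℕ) :
    s.PairwiseDisjoint fun t => digitSlice b L x t ×ˢ digitSlice b L y t := by
  intro t _ t' _ htt'
  refine Set.disjoint_prod.2 (Or.inl (Set.disjoint_left.2 fun u hu hu' => htt' ?_))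
  have h1 : t < t' + 1 := by exact_mod_cast hu.2.1.trans_lt hu'.2.2
  have h2 : t' < t + 1 := by exact_mod_cast hu'.2.1.trans_lt hu.2.2
  omega

lemma agreeVol_eq_sum (hb : 0 < b) (L : ℕ) (x y : ℝ) :
    agreeVol b L x y = (∑ t ∈ Finset.range (b ^ L),
      cellLen (b ^ L * x) t * cellLen (b ^ L * y) t) / ((b : ℝ) ^ L) ^ 2 := by
  have hfin (t : ℕ) : volume (digitSlice b L x t ×ˢ digitSlice b L y t) ≠ ⊤ := by
    simp [Measure.volume_eq_prod, Measure.prod_prod, volume_digitSlice hb, ENNReal.mul_ne_top]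
  rw [agreeVol, inter_agreeSet_eq_biUnion hb, measure_biUnion_finset
      (pairwiseDisjoint_digitSlice b L x y _) fun t _ =>
        (measurableSet_digitSlice b L x t).prod (measurableSet_digitSlice b L y t),
    ENNReal.toReal_sum fun t _ => hfin t, Finset.sum_div]
  refine Finset.sum_congr rfl fun t _ => ?_
  rw [Measure.volume_eq_prod, Measure.prod_prod, ENNReal.toReal_mul, toReal_volume_digitSlice hb,
    toReal_volume_digitSlice hb]
  ring

lemma sum_cellLen_mul_cellLen {X Y : ℝ} (hX : 0 ≤ X) (hXY : X ≤ Y) {N : ℕ} (hXN : X ≤ N) :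
    ∑ t ∈ Finset.range N, cellLen X t * cellLen Y t = cellArea X Y := by
  set p := ⌊X⌋₊
  have hp : (p : ℝ) ≤ X := Nat.floor_le hX
  have hp1 : X < p + 1 := Nat.lt_floor_add_one X
  have hpN : p ≤ N := Nat.floor_le_of_le hXN
  have hzero (t : ℕ) (ht : X ≤ t) : cellLen X t = 0 := by
    rw [cellLen, min_eq_left (by linarith), max_eq_right (by linarith)]
  have hone (Z : ℝ) (t : ℕ) (ht : t < p) (hZ : X ≤ Z) : cellLen Z t = 1 := by
    have : (t : ℝ) + 1 ≤ p := by exact_mod_cast ht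
    rw [cellLen, min_eq_right (by linarith), max_eq_left (by linarith)]
    ring
  calc ∑ t ∈ Finset.range N, cellLen X t * cellLen Y t
      = ∑ t ∈ Finset.range (N + 1), cellLen X t * cellLen Y t := by
        rw [Finset.sum_range_succ, hzero N hXN, zero_mul, add_zero]
    _ = ∑ t ∈ Finset.range (p + 1), cellLen X t * cellLen Y t := by
        refine (Finset.sum_subset (Finset.range_subset_range.2 (by omega)) fun t _ ht => ?_).symm
        have : (p : ℝ) + 1 ≤ t := by exact_mod_cast not_lt.1 (Finset.mem_range.not.1 ht)
        rw [hzero t (by linarith), zero_mul]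
    _ = p + (X - p) * min (Y - p) 1 := by
        have hlastX : cellLen X p = X - p := by
          rw [cellLen, min_eq_left hp1.le, max_eq_left (by linarith)]
        have hlastY : cellLen Y p = min (Y - p) 1 := by
          rw [cellLen, ← min_sub_sub_right, add_sub_cancel_left,
            max_eq_left (le_min (by linarith) zero_le_one)]
        rw [Finset.sum_range_succ, Finset.sum_congr rfl fun t ht => by
            rw [hone X t (Finset.mem_range.1 ht) le_rfl, hone Y t (Finset.mem_range.1 ht) hXY],
          Finset.sum_const, Finset.card_range, nsmul_eq_mul, mul_one, mul_one, hlastX, hlastY]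
    _ = cellArea X Y := by rw [cellArea, Int.fract, ← natCast_floor_eq_intCast_floor hX]

lemma agreeVol_eq_cellArea (hb : 0 < b) (L : ℕ) (hx : 0 ≤ x) (hxy : x ≤ y) (hy : y ≤ 1) :
    agreeVol b L x y = cellArea (b ^ L * x) (b ^ L * y) / ((b : ℝ) ^ L) ^ 2 := by
  have hB : (0 : ℝ) < (b : ℝ) ^ L := by positivity
  rw [agreeVol_eq_sum hb, sum_cellLen_mul_cellLen (by positivity)
    (mul_le_mul_of_nonneg_left hxy hB.le) (by push_cast; nlinarith)]

lemma agreeVol_comm (hb : 0 < b) (L : ℕ) (x y : ℝ) : agreeVol b L x y = agreeVol b L y x := by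
  simp only [agreeVol_eq_sum hb, mul_comm]

lemma agreeVol_zero (hb : 0 < b) (hx : x ∈ Icc (0 : ℝ) 1) (hy : y ∈ Icc (0 : ℝ) 1) :
    agreeVol b 0 x y = x * y := by
  simp [agreeVol_eq_sum hb, cellLen, hx.1, hy.1, hx.2, hy.2]

noncomputable def agreeGap (b L : ℕ) (x y : ℝ) : ℝ := b * agreeVol b (L + 1) x y - agreeVol b L x y

lemma agreeGap_eq_cellDefect (hb : 0 < b) (L : ℕ) (hx : 0 ≤ x) (hxy : x ≤ y) (hy : y ≤ 1) :
    agreeGap b L x y = cellDefect b (b ^ L * x) (b ^ L * y) / (b * ((b : ℝ) ^ L) ^ 2) := by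
  have hb' : (0 : ℝ) < b := by exact_mod_cast hb
  rw [agreeGap, agreeVol_eq_cellArea hb _ hx hxy hy, agreeVol_eq_cellArea hb _ hx hxy hy,
    cellDefect, pow_succ', mul_assoc, mul_assoc]
  field_simp

lemma agreeGap_comm (hb : 0 < b) (L : ℕ) (x y : ℝ) : agreeGap b L x y = agreeGap b L y x := by
  rw [agreeGap, agreeGap, agreeVol_comm hb, agreeVol_comm hb L]

lemma agreeGap_nonneg (hb : 0 < b) (L : ℕ) (hx : x ∈ Icc (0 : ℝ) 1) (hy : y ∈ Icc (0 : ℝ) 1) :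
    0 ≤ agreeGap b L x y := by
  wlog hxy : x ≤ y generalizing x y
  · rw [agreeGap_comm hb]; exact this hy hx (le_of_not_ge hxy)
  rw [agreeGap_eq_cellDefect hb L hx.1 hxy hy.2]
  exact div_nonneg (cellDefect_nonneg hb (mul_le_mul_of_nonneg_left hxy (by positivity)))
    (by positivity)

lemma agreeGap_succ_le (hb : 0 < b) (L : ℕ) (hx : x ∈ Icc (0 : ℝ) 1) (hy : y ∈ Icc (0 : ℝ) 1) :
    agreeGap b (L + 1) x y ≤ agreeGap b L x y := by
  wlog hxy : x ≤ y generalizing x y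
  · rw [agreeGap_comm hb, agreeGap_comm hb L]; exact this hy hx (le_of_not_ge hxy)
  have hb' : (0 : ℝ) < b := by exact_mod_cast hb
  have hB : (0 : ℝ) < (b : ℝ) ^ L := by positivity
  have h := cellDefect_mul_le hb (mul_le_mul_of_nonneg_left hxy hB.le)
  rw [agreeGap_eq_cellDefect hb _ hx.1 hxy hy.2, agreeGap_eq_cellDefect hb _ hx.1 hxy hy.2,
    pow_succ', mul_assoc, mul_assoc, div_le_div_iff₀ (by positivity) (by positivity)]
  nlinarith [mul_le_mul_of_nonneg_right h (by positivity : (0 : ℝ) ≤ b * ((b : ℝ) ^ L) ^ 2)]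

end AgreeVol

section TCoef

variable {b : ℕ} {x y : ℝ}

lemma tCoef_succ (hb : 2 ≤ b) (x y : ℝ) (m : ℕ) :
    tCoef b x y (m + 1) = (agreeGap b m x y - agreeGap b (m + 1) x y) / (b - 1) := by
  rw [tCoef, Vi_eq_agreeVol_sub hb, Vi_eq_agreeVol_sub hb, agreeGap, agreeGap]
  ring

lemma tCoef_nonneg (hb : 2 ≤ b) (hx : x ∈ Icc (0 : ℝ) 1) (hy : y ∈ Icc (0 : ℝ) 1) (k : ℕ) :
    0 ≤ tCoef b x y k := by
  have hb1 : (0 : ℝ) ≤ b - 1 := sub_nonneg.2 (by exact_mod_cast (by omega : 1 ≤ b))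
  cases k with
  | zero => exact div_nonneg (mul_nonneg (Nat.cast_nonneg b) ENNReal.toReal_nonneg) hb1
  | succ m =>
    rw [tCoef_succ hb]
    exact div_nonneg (sub_nonneg.2 (agreeGap_succ_le (by omega) m hx hy)) hb1

lemma sum_Iic_tCoef (hb : 2 ≤ b) (x y : ℝ) (N : ℕ) :
    ∑ m ∈ Finset.Iic N, tCoef b x y m = agreeVol b 0 x y - agreeGap b N x y / (b - 1) := by
  have hb1 : (b : ℝ) - 1 ≠ 0 := sub_ne_zero.2 (by exact_mod_cast (by omega : b ≠ 1))
  rw [← Nat.range_succ_eq_Iic]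
  induction N with
  | zero =>
    rw [Finset.sum_range_one, tCoef, Vi_eq_agreeVol_sub hb, agreeGap]
    field_simp
    ring
  | succ N ih => rw [Finset.sum_range_succ, ih, tCoef_succ hb]; ring

lemma sum_Iic_tCoef_le (hb : 2 ≤ b) (hx : x ∈ Icc (0 : ℝ) 1) (hy : y ∈ Icc (0 : ℝ) 1) (N : ℕ) :
    ∑ m ∈ Finset.Iic N, tCoef b x y m ≤ x * y := by
  have hb1 : (0 : ℝ) ≤ b - 1 := sub_nonneg.2 (by exact_mod_cast (by omega : 1 ≤ b))
  rw [sum_Iic_tCoef hb, agreeVol_zero (by omega) hx hy, sub_le_self_iff]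
  exact div_nonneg (agreeGap_nonneg (by omega) N hx hy) hb1

lemma sum_Iic_pow_mul_tCoef (b : ℕ) (x y : ℝ) (G : ℕ) :
    ∑ m ∈ Finset.Iic G, (b : ℝ) ^ m * tCoef b x y m = b ^ (G + 1) * Vi b G x y / (b - 1) := by
  rw [← Nat.range_succ_eq_Iic]
  induction G with
  | zero => simp [tCoef]
  | succ G ih => rw [Finset.sum_range_succ, ih, tCoef]; ring

end TCoef

section PairSums

variable {b n s : ℕ}

noncomputable def gammaVec (b : ℕ) {s : ℕ} (u v : Fin s → ℝ) : Fin s → ℕ :=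
  fun r => (gammaB b (u r) (v r)).toNat

lemma forall_gammaB_eq_iff {u v : Fin s → ℝ} (h : ∀ r, gammaB b (u r) (v r) ≠ ⊤)
    (k : Fin s → ℕ) : (∀ r, gammaB b (u r) (v r) = k r) ↔ gammaVec b u v = k := by
  simp only [funext_iff, gammaVec, ← Nat.cast_inj (R := ℕ∞), ENat.natCast_toNat (h _)]

lemma forall_le_gammaB_iff {u v : Fin s → ℝ} (h : ∀ r, gammaB b (u r) (v r) ≠ ⊤)
    (k : Fin s → ℕ) : (∀ r, (k r : ℕ∞) ≤ gammaB b (u r) (v r)) ↔ k ≤ gammaVec b u v := by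
  simp only [Pi.le_def, gammaVec, ← Nat.cast_le (α := ℕ∞), ENat.natCast_toNat (h _)]

lemma gammaB_ne_top_of_injective {P : Fin n → Fin s → ℝ}
    (hdist : ∀ r : Fin s, Function.Injective fun i => P i r) {l j : Fin n} (hjl : j ≠ l)
    (r : Fin s) : gammaB b (P l r) (P j r) ≠ ⊤ :=
  gammaB_ne_top fun h => hjl (hdist r h.symm)

lemma sum_card_filter_ne_and (c c' : Fin n → Fin n → Prop) [∀ l, DecidablePred (c l)]
    [∀ l, DecidablePred (c' l)] (h : ∀ l j, j ≠ l → (c l j ↔ c' l j)) :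
    (∑ l, (Finset.univ.filter fun j => j ≠ l ∧ c l j).card : ℝ) =
      ∑ l, ∑ j ∈ Finset.univ.erase l, if c' l j then 1 else 0 := by
  refine Finset.sum_congr rfl fun l _ => ?_
  rw [Finset.sum_boole]
  congr 2
  ext j
  simp only [Finset.mem_filter, Finset.mem_univ, true_and, Finset.mem_erase, and_true]
  exact ⟨fun ⟨hjl, hc⟩ => ⟨hjl, (h l j hjl).1 hc⟩, fun ⟨hjl, hc⟩ => ⟨hjl, (h l j hjl).2 hc⟩⟩

variable {P : Fin n → Fin s → ℝ}

lemma NB_eq_sum (hdist : ∀ r : Fin s, Function.Injective fun i => P i r) (i : Fin s → ℕ) :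
    (NB b P i : ℝ) = ∑ l, ∑ j ∈ Finset.univ.erase l,
      if gammaVec b (P l) (P j) = i then 1 else 0 := by
  rw [NB, Nat.cast_sum]
  exact sum_card_filter_ne_and _ _ fun l j hjl =>
    forall_gammaB_eq_iff (gammaB_ne_top_of_injective hdist hjl) i

lemma MB_eq_sum (hdist : ∀ r : Fin s, Function.Injective fun i => P i r) (k : Fin s → ℕ) :
    (MB b P k : ℝ) = ∑ l, ∑ j ∈ Finset.univ.erase l,
      if k ≤ gammaVec b (P l) (P j) then 1 else 0 := by
  rw [MB, Nat.cast_sum]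
  exact sum_card_filter_ne_and _ _ fun l j hjl =>
    forall_le_gammaB_iff (gammaB_ne_top_of_injective hdist hjl) k

end PairSums

section Integral

variable {b n s : ℕ} {P : Fin n → Fin s → ℝ}

noncomputable def pairWeight (b n : ℕ) {s : ℕ} (i : Fin s → ℕ) : ℝ :=
  (b : ℝ) ^ (s + ∑ r, i r) / (((b : ℝ) - 1) ^ s * ((n : ℝ) * ((n : ℝ) - 1)))

lemma psi_eq_sum_indicator (hdist : ∀ r : Fin s, Function.Injective fun i => P i r)
    {p : (Fin s → ℝ) × (Fin s → ℝ)} (hp₁ : ∀ r, p.1 r ∈ Ico (0 : ℝ) 1)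
    (hp₂ : ∀ r, p.2 r ∈ Ico (0 : ℝ) 1) :
    psi b P p.1 p.2 = ∑ l, ∑ j ∈ Finset.univ.erase l, (DsetS b s (gammaVec b (P l) (P j))).indicator
      (fun _ => pairWeight b n (gammaVec b (P l) (P j))) p := by
  have hmem (i : Fin s → ℕ) : p ∈ DsetS b s i ↔ ∀ r, gammaB b (p.1 r) (p.2 r) = i r := by
    simp only [DsetS, mem_ofPred_eq]
    exact ⟨fun h => h.2.2, fun h => ⟨hp₁, hp₂, h⟩⟩
  by_cases hfin : ∀ r, gammaB b (p.1 r) (p.2 r) ≠ ⊤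
  · rw [psi, if_pos hfin, mul_div_assoc]
    change (NB b P (gammaVec b p.1 p.2) : ℝ) * pairWeight b n (gammaVec b p.1 p.2) = _
    rw [NB_eq_sum hdist, Finset.sum_mul]
    refine Finset.sum_congr rfl fun l _ => ?_
    rw [Finset.sum_mul]
    refine Finset.sum_congr rfl fun j _ => ?_
    rw [indicator_apply, hmem, forall_gammaB_eq_iff hfin]
    split_ifs <;> simp_all
  · obtain ⟨r, hr⟩ := not_forall_not.1 hfin
    rw [psi, if_neg hfin]
    refine (Finset.sum_eq_zero fun l _ => Finset.sum_eq_zero fun j _ =>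
      indicator_of_notMem (fun h => ?_) _).symm
    simpa [hr] using (hmem _).1 h r

lemma measurableSet_DsetS (hb : 2 ≤ b) (i : Fin s → ℕ) : MeasurableSet (DsetS b s i) := by
  have h : DsetS b s i =
      ⋂ r, (fun p : (Fin s → ℝ) × (Fin s → ℝ) => (p.1 r, p.2 r)) ⁻¹' Dset b (i r) := by
    ext p
    simp only [DsetS, Dset, mem_ofPred_eq, mem_iInter, mem_preimage]
    exact ⟨fun ⟨h1, h2, h3⟩ r => ⟨h1 r, h2 r, h3 r⟩,
      fun h => ⟨fun r => (h r).1, fun r => (h r).2.1, fun r => (h r).2.2⟩⟩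
  rw [h]
  exact MeasurableSet.iInter fun r => (measurableSet_Dset hb (i r)).preimage
    (((measurable_pi_apply r).comp measurable_fst).prodMk
      ((measurable_pi_apply r).comp measurable_snd))

lemma measurableSet_Rset (x y : Fin s → ℝ) : MeasurableSet (Rset s x y) :=
  (MeasurableSet.univ_pi fun _ => measurableSet_Ico).prod
    (MeasurableSet.univ_pi fun _ => measurableSet_Ico)

lemma volume_Rset_ne_top (x y : Fin s → ℝ) : volume (Rset s x y) ≠ ⊤ := by
  simp [Rset, Measure.volume_eq_prod, Measure.prod_prod, volume_pi_pi, Real.volume_Ico,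
    ENNReal.mul_ne_top, ENNReal.prod_ne_top]

lemma volume_Rset_inter_DsetS (x y : Fin s → ℝ) (i : Fin s → ℕ) :
    (volume (Rset s x y ∩ DsetS b s i)).toReal = ∏ r, Vi b (i r) (x r) (y r) := by
  have hpre : MeasurableEquiv.arrowProdEquivProdArrow ℝ ℝ (Fin s) ⁻¹' (Rset s x y ∩ DsetS b s i) =
      univ.pi fun r => (Ico 0 (x r) ×ˢ Ico 0 (y r)) ∩ Dset b (i r) := by
    ext f
    simp only [Rset, DsetS, Dset, MeasurableEquiv.arrowProdEquivProdArrow,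
      Equiv.arrowProdEquivProdArrow, MeasurableEquiv.coe_mk, Equiv.coe_fn_mk, mem_preimage,
      mem_inter_iff, mem_prod, mem_pi, mem_univ, forall_true_left, mem_ofPred_eq]
    exact ⟨fun ⟨⟨h1, h2⟩, h3, h4, h5⟩ r => ⟨⟨h1 r, h2 r⟩, h3 r, h4 r, h5 r⟩,
      fun h => ⟨⟨fun r => (h r).1.1, fun r => (h r).1.2⟩, fun r => (h r).2.1,
        fun r => (h r).2.2.1, fun r => (h r).2.2.2⟩⟩
  rw [← (volume_measurePreserving_arrowProdEquivProdArrow ℝ ℝ (Fin s)).measure_preimage_equiv,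
    hpre, volume_pi_pi, ENNReal.toReal_prod]
  rfl

lemma integral_psi (hb : 2 ≤ b) (hdist : ∀ r : Fin s, Function.Injective fun i => P i r)
    {x y : Fin s → ℝ} (hx : ∀ r, x r ≤ 1) (hy : ∀ r, y r ≤ 1) :
    ∫ p in Rset s x y, psi b P p.1 p.2 = ∑ l, ∑ j ∈ Finset.univ.erase l,
      pairWeight b n (gammaVec b (P l) (P j)) *
        ∏ r, Vi b (gammaVec b (P l) (P j) r) (x r) (y r) := by
  have hint (i : Fin s → ℕ) : IntegrableOn ((DsetS b s i).indicator fun _ => pairWeight b n i)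
      (Rset s x y) :=
    (integrableOn_const (volume_Rset_ne_top x y)).indicator (measurableSet_DsetS hb i)
  rw [setIntegral_congr_fun (measurableSet_Rset x y) fun p hp => psi_eq_sum_indicator hdist
      (fun r => ⟨(hp.1 r trivial).1, (hp.1 r trivial).2.trans_le (hx r)⟩)
      (fun r => ⟨(hp.2 r trivial).1, (hp.2 r trivial).2.trans_le (hy r)⟩),
    integral_finsetSum _ fun l _ => integrable_finsetSum _ fun j _ => hint _]
  refine Finset.sum_congr rfl fun l _ => ?_
  rw [integral_finsetSum _ fun j _ => hint _]
  refine Finset.sum_congr rfl fun j _ => ?_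
  rw [setIntegral_indicator (measurableSet_DsetS hb _), setIntegral_const, smul_eq_mul,
    measureReal_def, volume_Rset_inter_DsetS, mul_comm]

end Integral

section Main

variable {b n s : ℕ} {P : Fin n → Fin s → ℝ} {x y : Fin s → ℝ}

lemma CB_nonneg (P : Fin n → Fin s → ℝ) (k : Fin s → ℕ) : 0 ≤ CB b P k := by
  refine div_nonneg (by positivity) ?_
  rcases Nat.eq_zero_or_pos n with rfl | hn
  · simp
  · have : (1 : ℝ) ≤ n := by exact_mod_cast hn
    nlinarith

lemma prod_tCoef_mul_CB (hdist : ∀ r : Fin s, Function.Injective fun i => P i r)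
    (x y : Fin s → ℝ) (k : Fin s → ℕ) :
    (∏ r, tCoef b (x r) (y r) (k r)) * CB b P k = ∑ l, ∑ j ∈ Finset.univ.erase l,
      if k ≤ gammaVec b (P l) (P j) then
        (∏ r, (b : ℝ) ^ k r * tCoef b (x r) (y r) (k r)) / ((n : ℝ) * ((n : ℝ) - 1)) else 0 := by
  have h : (∏ r, tCoef b (x r) (y r) (k r)) * CB b P k =
      (∏ r, (b : ℝ) ^ k r * tCoef b (x r) (y r) (k r)) / ((n : ℝ) * ((n : ℝ) - 1)) * MB b P k := by
    rw [CB, Finset.prod_mul_distrib, Finset.prod_pow_eq_pow_sum]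
    ring
  rw [h, MB_eq_sum hdist, Finset.mul_sum]
  refine Finset.sum_congr rfl fun l _ => ?_
  rw [Finset.mul_sum]
  refine Finset.sum_congr rfl fun j _ => ?_
  split_ifs <;> simp

lemma sum_Iic_prod_pow_mul_tCoef (x y : Fin s → ℝ) (g : Fin s → ℕ) :
    ∑ k ∈ Finset.Iic g, ∏ r, (b : ℝ) ^ k r * tCoef b (x r) (y r) (k r) =
      ∏ r, (b : ℝ) ^ (g r + 1) * Vi b (g r) (x r) (y r) / (b - 1) := by
  rw [← Finset.prod_congr rfl fun r _ => sum_Iic_pow_mul_tCoef b (x r) (y r) (g r),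
    Finset.prod_univ_sum]
  rfl

lemma pairWeight_mul_prod_Vi (x y : Fin s → ℝ) (g : Fin s → ℕ) :
    pairWeight b n g * ∏ r, Vi b (g r) (x r) (y r) =
      (∏ r, (b : ℝ) ^ (g r + 1) * Vi b (g r) (x r) (y r) / (b - 1)) /
        ((n : ℝ) * ((n : ℝ) - 1)) := by
  rw [pairWeight, Finset.prod_div_distrib, Finset.prod_mul_distrib, Finset.prod_pow_eq_pow_sum,
    Finset.prod_const, Finset.card_univ, Fintype.card_fin, Finset.sum_add_distrib,
    Finset.sum_const, Finset.card_univ, Fintype.card_fin, smul_eq_mul, mul_one,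
    div_mul_eq_mul_div, div_div, add_comm s]

lemma sum_Iic_prod_tCoef_mul_CB (hdist : ∀ r : Fin s, Function.Injective fun i => P i r)
    {G : Fin s → ℕ} (hG : ∀ l j, gammaVec b (P l) (P j) ≤ G) :
    ∑ k ∈ Finset.Iic G, (∏ r, tCoef b (x r) (y r) (k r)) * CB b P k =
      ∑ l, ∑ j ∈ Finset.univ.erase l, pairWeight b n (gammaVec b (P l) (P j)) *
        ∏ r, Vi b (gammaVec b (P l) (P j) r) (x r) (y r) := by
  rw [Finset.sum_congr rfl fun k _ => prod_tCoef_mul_CB hdist x y k, Finset.sum_comm]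
  refine Finset.sum_congr rfl fun l _ => ?_
  rw [Finset.sum_comm]
  refine Finset.sum_congr rfl fun j _ => ?_
  have hfilter : (Finset.Iic G).filter (· ≤ gammaVec b (P l) (P j)) =
      Finset.Iic (gammaVec b (P l) (P j)) := by
    ext k
    simp only [Finset.mem_filter, Finset.mem_Iic, and_iff_right_iff_imp]
    exact fun hk => hk.trans (hG l j)
  rw [← Finset.sum_filter, hfilter, ← Finset.sum_div, sum_Iic_prod_pow_mul_tCoef,
    pairWeight_mul_prod_Vi]

lemma sum_Iic_prod_tCoef_mul_CB_le (hb : 2 ≤ b) (hx : ∀ r, x r ∈ Icc (0 : ℝ) 1)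
    (hy : ∀ r, y r ∈ Icc (0 : ℝ) 1) (G : Fin s → ℕ) {C : ℝ} (hC : ∀ k, CB b P k ≤ C) :
    ∑ k ∈ Finset.Iic G, (∏ r, tCoef b (x r) (y r) (k r)) * CB b P k ≤ C * ∏ r, x r * y r := by
  have htCoef (r : Fin s) (m : ℕ) : 0 ≤ tCoef b (x r) (y r) m := tCoef_nonneg hb (hx r) (hy r) m
  calc ∑ k ∈ Finset.Iic G, (∏ r, tCoef b (x r) (y r) (k r)) * CB b P k
      ≤ ∑ k ∈ Finset.Iic G, (∏ r, tCoef b (x r) (y r) (k r)) * C :=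
        Finset.sum_le_sum fun k _ =>
          mul_le_mul_of_nonneg_left (hC k) (Finset.prod_nonneg fun r _ => htCoef r _)
    _ = C * ∏ r, ∑ m ∈ Finset.Iic (G r), tCoef b (x r) (y r) m := by
        rw [← Finset.sum_mul, mul_comm, Finset.prod_univ_sum]
        rfl
    _ ≤ C * ∏ r, x r * y r :=
        mul_le_mul_of_nonneg_left
          (Finset.prod_le_prod (fun r _ => Finset.sum_nonneg fun m _ => htCoef r m)
            fun r _ => sum_Iic_tCoef_le hb (hx r) (hy r) (G r))
          ((CB_nonneg P 0).trans (hC 0))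

end Main

theorem stmt16_general (b n s : ℕ) (hb : 2 ≤ b)
    (P : Fin n → Fin s → ℝ)
    (hdist : ∀ j : Fin s, Function.Injective fun i => P i j)
    (x y : Fin s → ℝ)
    (hx : ∀ j, x j ∈ Set.Icc (0 : ℝ) 1) (hy : ∀ j, y j ∈ Set.Icc (0 : ℝ) 1) :
    (∫ p in Rset s x y, psi b P p.1 p.2 =
      ∑' k : Fin s → ℕ, (∏ j, tCoef b (x j) (y j) (k j)) * CB b P k) ∧
    ∀ Cmax : ℝ, (∀ k : Fin s → ℕ, CB b P k ≤ Cmax) →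
      (∫ p in Rset s x y, psi b P p.1 p.2) ≤ Cmax * ∏ j, x j * y j := by
  set G : Fin s → ℕ := Finset.univ.sup fun q : Fin n × Fin n => gammaVec b (P q.1) (P q.2)
  have hG (l j : Fin n) : gammaVec b (P l) (P j) ≤ G :=
    Finset.le_sup (f := fun q : Fin n × Fin n => gammaVec b (P q.1) (P q.2))
      (Finset.mem_univ (l, j))
  have htsum : ∑' k : Fin s → ℕ, (∏ j, tCoef b (x j) (y j) (k j)) * CB b P k =
      ∑ k ∈ Finset.Iic G, (∏ j, tCoef b (x j) (y j) (k j)) * CB b P k := by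
    refine tsum_eq_sum fun k hk => ?_
    rw [prod_tCoef_mul_CB hdist]
    exact Finset.sum_eq_zero fun l _ => Finset.sum_eq_zero fun j _ =>
      if_neg fun hkg => hk (Finset.mem_Iic.2 (hkg.trans (hG l j)))
  have hintegral : ∫ p in Rset s x y, psi b P p.1 p.2 =
      ∑ k ∈ Finset.Iic G, (∏ j, tCoef b (x j) (y j) (k j)) * CB b P k := by
    rw [integral_psi hb hdist (fun r => (hx r).2) (fun r => (hy r).2),
      sum_Iic_prod_tCoef_mul_CB hdist hG]
  exact ⟨hintegral.trans htsum.symm,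
    fun C hC => hintegral ▸ sum_Iic_prod_tCoef_mul_CB_le hb hx hy G hC⟩

theorem stmt16 (b n s : ℕ) (hb : 2 ≤ b) (hs : 1 ≤ s) (hn : 2 ≤ n)
    (P : Fin n → Fin s → ℝ) (hP : ∀ i j, P i j ∈ Set.Ico (0 : ℝ) 1)
    (hdist : ∀ j : Fin s, Function.Injective fun i => P i j)
    (x y : Fin s → ℝ)
    (hx : ∀ j, x j ∈ Set.Icc (0 : ℝ) 1) (hy : ∀ j, y j ∈ Set.Icc (0 : ℝ) 1) :
    (∫ p in Rset s x y, psi b P p.1 p.2 =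
      ∑' k : Fin s → ℕ, (∏ j, tCoef b (x j) (y j) (k j)) * CB b P k) ∧
    ∀ Cmax : ℝ, (∀ k : Fin s → ℕ, CB b P k ≤ Cmax) →
      (∫ p in Rset s x y, psi b P p.1 p.2) ≤ Cmax * ∏ j, x j * y j :=
  stmt16_general b n s hb P hdist x y hx hy
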